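/- arXiv:0802.0012 — 2 statements merged into one kernel-verified Lean document; each statement's English description precedes it below -/
import Mathlib

section
/- There exists Λ > 0 such that for every λ > Λ, the operator A^λ has no eigenvalues in the closed left half-plane: there exist no k ∈ ℂ with Re k ≤ 0 and nonzero u ∈ H^m(ℝ) satisfying A^λ u = k u. -/
open MeasureTheory Filter Set

noncomputable section

/-- An abstract realization of the Fourier–Plancherel transform on `L²(ℝ; ℂ)`:
a map on functions that is norm-preserving and linear on `L²` and agrees with the
usual Fourier integral on `L¹ ∩ L²` (hence is the standard `L²` Fourier transform). -/
structure FourierL2 where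
  toFun : (ℝ → ℂ) → ℝ → ℂ
  memLp : ∀ u : ℝ → ℂ, MemLp u 2 volume → MemLp (toFun u) 2 volume
  plancherel : ∀ u : ℝ → ℂ, MemLp u 2 volume →
    eLpNorm (toFun u) 2 volume = eLpNorm u 2 volume
  map_add : ∀ u v : ℝ → ℂ, MemLp u 2 volume → MemLp v 2 volume →
    toFun (u + v) =ᵐ[volume] toFun u + toFun v
  map_smul : ∀ (a : ℂ) (u : ℝ → ℂ), MemLp u 2 volume →
    toFun (a • u) =ᵐ[volume] a • toFun u
  agree : ∀ u : ℝ → ℂ, Integrable u volume → MemLp u 2 volume →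
    toFun u =ᵐ[volume] FourierTransform.fourier u

/-- Membership in the Sobolev space `H^m(ℝ) = {u ∈ L² : (1+|k|)^m û ∈ L²}`. -/
def HmMem (FT : FourierL2) (m : ℝ) (u : ℝ → ℂ) : Prop :=
  MemLp u 2 volume ∧ MemLp (fun k => ((1 + |k|) ^ m : ℝ) • FT.toFun u k) 2 volume

/-- The `L²` inner product. -/
def L2inner (u v : ℝ → ℂ) : ℂ := ∫ x : ℝ, u x * (starRingEnd ℂ) (v x)

/-- The `L²` norm. -/
def L2norm (u : ℝ → ℂ) : ℝ := (eLpNorm u 2 volume).toReal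

/-- `T` is the Fourier multiplier operator with symbol `β`, on the domain `D`. -/
def IsMult (FT : FourierL2) (β : ℝ → ℂ) (D : (ℝ → ℂ) → Prop)
    (T : (ℝ → ℂ) → ℝ → ℂ) : Prop :=
  ∀ u, D u → MemLp (T u) 2 volume ∧
    FT.toFun (T u) =ᵐ[volume] fun k => β k * FT.toFun u k

/-- The operator `L₀ = M + (1 - 1/c) - (1/c) f'(u_c)` for the BBM type equation. -/
def L0bbm (Mop : (ℝ → ℂ) → ℝ → ℂ) (f uc : ℝ → ℝ) (c : ℝ) (u : ℝ → ℂ) : ℝ → ℂ :=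
  fun x => Mop u x + (1 - 1/c : ℂ) * u x - (1/c : ℂ) * Complex.ofReal (deriv f (uc x)) * u x

/-- The operator `A^λ = M + 1 − (1/c)(1 − E^{λ,−})((1 + f'(u_c))·)` for the BBM type
equation, where `Em lam` is the Fourier multiplier with symbol `λ/(λ - ick)`. -/
def Abbm (Mop : (ℝ → ℂ) → ℝ → ℂ) (Em : ℝ → (ℝ → ℂ) → ℝ → ℂ)
    (f uc : ℝ → ℝ) (c lam : ℝ) (u : ℝ → ℂ) : ℝ → ℂ :=
  fun x => Mop u x + u x - (1/c : ℂ) *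
    (((1 + Complex.ofReal (deriv f (uc x))) * u x) -
      Em lam (fun y => (1 + Complex.ofReal (deriv f (uc y))) * u y) x)

/-! On the Fourier side the eigenvalue equation `A^λ u = κ u` reads
`(α(k) + 1 - κ) û(k) = (1/c) · (-ick / (λ - ick)) · ŵ(k)` with `w = (1 + f'(u_c)) u`.
Since `Re κ ≤ 0`, the left factor has modulus at least `α(k) + 1`. The multiplier on the right
has modulus `|k| / |λ - ick|`, which is at most `|k| / λ` (small on bounded frequencies once `λ`
is large) and at most `1/c ≤ 1` (small against `α(k) ≥ a|k|^m` on large frequencies). Hence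
`|û| ≤ δ |ŵ|` with `δ = 1 / (2(1 + sup |f'(u_c)|))`, and Plancherel gives
`‖u‖ ≤ δ ‖w‖ ≤ ‖u‖ / 2`, so `u = 0`. The bound on `f'(u_c)` comes from `u_c` being continuous
and vanishing at infinity. -/

open scoped Topology

namespace FourierL2

variable (FT : FourierL2) {u v : ℝ → ℂ}

theorem map_add' (hu : MemLp u 2 volume) (hv : MemLp v 2 volume) :
    FT.toFun (fun x => u x + v x) =ᵐ[volume] fun k => FT.toFun u k + FT.toFun v k :=
  FT.map_add u v hu hv

theorem map_const_mul (a : ℂ) (hu : MemLp u 2 volume) :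
    FT.toFun (fun x => a * u x) =ᵐ[volume] fun k => a * FT.toFun u k :=
  FT.map_smul a u hu

theorem map_sub (hu : MemLp u 2 volume) (hv : MemLp v 2 volume) :
    FT.toFun (fun x => u x - v x) =ᵐ[volume] fun k => FT.toFun u k - FT.toFun v k := by
  have hsub : (fun x => u x - v x) = fun x => u x + (-1 : ℂ) * v x := by
    funext x; ring
  rw [hsub]
  filter_upwards [FT.map_add' hu (hv.const_mul (-1)), FT.map_const_mul (-1) hv] with k hadd hneg
  rw [hadd, hneg]; ring

theorem toFun_ae_eq_zero (hu : MemLp u 2 volume) (h : u =ᵐ[volume] 0) :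
    FT.toFun u =ᵐ[volume] 0 := by
  have hnorm : eLpNorm (FT.toFun u) 2 volume = 0 := by
    rw [FT.plancherel u hu, eLpNorm_congr_ae h, eLpNorm_zero]
  exact (eLpNorm_eq_zero_iff (FT.memLp u hu).1 two_ne_zero).mp hnorm

theorem congr_ae (hu : MemLp u 2 volume) (hv : MemLp v 2 volume) (h : u =ᵐ[volume] v) :
    FT.toFun u =ᵐ[volume] FT.toFun v := by
  have hdiff : FT.toFun (fun x => u x - v x) =ᵐ[volume] 0 :=
    FT.toFun_ae_eq_zero (hu.sub hv) (by filter_upwards [h] with x hx; simp [hx])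
  filter_upwards [FT.map_sub hu hv, hdiff] with k hsub h0
  rw [Pi.zero_apply, hsub] at h0
  exact sub_eq_zero.mp h0

theorem ae_eq_zero_of_norm_le {w : ℝ → ℂ} (hu : MemLp u 2 volume) (hw : MemLp w 2 volume)
    {δ C : ℝ} (hδ : 0 ≤ δ) (hδC : δ * C < 1)
    (hFT : ∀ᵐ k ∂volume, ‖FT.toFun u k‖ ≤ δ * ‖FT.toFun w k‖)
    (hwu : ∀ x, ‖w x‖ ≤ C * ‖u x‖) :
    u =ᵐ[volume] 0 := by
  set N := eLpNorm u 2 volume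
  have hle : N ≤ ENNReal.ofReal (δ * C) * N :=
    calc N = eLpNorm (FT.toFun u) 2 volume := (FT.plancherel u hu).symm
      _ ≤ ENNReal.ofReal δ * eLpNorm (FT.toFun w) 2 volume :=
        eLpNorm_le_mul_eLpNorm_of_ae_le_mul hFT 2
      _ = ENNReal.ofReal δ * eLpNorm w 2 volume := by rw [FT.plancherel w hw]
      _ ≤ ENNReal.ofReal δ * (ENNReal.ofReal C * N) := by
        gcongr; exact eLpNorm_le_mul_eLpNorm_of_ae_le_mul (ae_of_all _ hwu) 2
      _ = ENNReal.ofReal (δ * C) * N := by rw [← mul_assoc, ENNReal.ofReal_mul hδ]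
  refine (eLpNorm_eq_zero_iff hu.1 two_ne_zero).mp (by_contra fun hN => ?_)
  have hlt : ENNReal.ofReal (δ * C) * N < 1 * N :=
    ENNReal.mul_lt_mul_left hN hu.2.ne (ENNReal.ofReal_lt_one.mpr hδC)
  exact ((hle.trans_lt hlt).trans_eq (one_mul N)).false

end FourierL2

theorem exists_norm_le_of_tendsto_cocompact {X E : Type*} [TopologicalSpace X]
    [NormedAddCommGroup E] {g : X → E} (hg : Continuous g)
    (h : Tendsto g (cocompact X) (𝓝 0)) : ∃ B, 0 ≤ B ∧ ∀ x, ‖g x‖ ≤ B :=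
  let G : ZeroAtInftyContinuousMap X E := ⟨⟨g, hg⟩, h⟩
  ⟨‖G.toBCF‖, norm_nonneg _, G.toBCF.norm_coe_le_norm⟩

section Symbol

open Complex

theorem le_norm_ofReal_sub_I_mul (lam c k : ℝ) : lam ≤ ‖(lam : ℂ) - I * c * k‖ := by
  simpa using re_le_norm ((lam : ℂ) - I * c * k)

theorem abs_mul_le_norm_ofReal_sub_I_mul (lam c k : ℝ) : |c * k| ≤ ‖(lam : ℂ) - I * c * k‖ := by
  simpa using abs_im_le_norm ((lam : ℂ) - I * c * k)

theorem norm_inv_mul_one_sub_div {c lam : ℝ} (k : ℝ) (hc : 0 < c) (hlam : lam ≠ 0) :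
    ‖(1 / c : ℂ) * (1 - lam / (lam - I * c * k))‖ = |k| / ‖(lam : ℂ) - I * c * k‖ := by
  have hz : (lam : ℂ) - I * c * k ≠ 0 := fun h => hlam (by simpa using congrArg re h)
  have hsub : (1 : ℂ) - lam / (lam - I * c * k) = -(I * c * k) / (lam - I * c * k) := by
    field_simp; ring
  rw [hsub]
  simp [abs_of_pos hc]
  field_simp

theorem exists_forall_div_norm_le {α : ℝ → ℝ} {m a K c δ : ℝ} (hm : 1 ≤ m) (ha : 0 < a)
    (hα_nonneg : ∀ k, 0 ≤ α k) (hα_lower : ∀ k, K ≤ |k| → a * |k| ^ m ≤ α k)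
    (hc : 1 ≤ c) (hδ : 0 < δ) :
    ∃ Λ, 0 < Λ ∧ ∀ lam : ℝ, Λ < lam → ∀ k : ℝ, |k| / ‖(lam : ℂ) - I * c * k‖ ≤ δ * (α k + 1) := by
  set R := max K (max 1 (1 / (δ * a)))
  have hR1 : 1 ≤ R := (le_max_left _ _).trans (le_max_right _ _)
  have hRδa : 1 ≤ δ * a * R := by
    have : 1 / (δ * a) ≤ R := (le_max_right _ _).trans (le_max_right _ _)
    rwa [div_le_iff₀' (by positivity)] at this
  refine ⟨R / δ, by positivity, fun lam hlam k => ?_⟩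
  have hlam0 : 0 < lam := (div_pos (by linarith) hδ).trans hlam
  have hz : 0 < ‖(lam : ℂ) - I * c * k‖ := hlam0.trans_le (le_norm_ofReal_sub_I_mul lam c k)
  rw [div_le_iff₀ hz]
  rcases le_or_gt |k| R with hkR | hRk
  · have hR : R < δ * lam := by rwa [div_lt_iff₀' hδ] at hlam
    have hα : δ ≤ δ * (α k + 1) := le_mul_of_one_le_right hδ.le (by linarith [hα_nonneg k])
    nlinarith [le_norm_ofReal_sub_I_mul lam c k]
  · have hk1 : 1 ≤ |k| := hR1.trans hRk.le
    have hkm : |k| ≤ |k| ^ m := by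
      simpa using Real.rpow_le_rpow_of_exponent_le hk1 hm
    have hα : 1 ≤ δ * α k :=
      calc 1 ≤ δ * a * R := hRδa
        _ ≤ δ * (a * |k| ^ m) := by rw [mul_assoc]; gcongr; exact hRk.le.trans hkm
        _ ≤ δ * α k := by gcongr; exact hα_lower k ((le_max_left _ _).trans hRk.le)
    have hck : |k| ≤ ‖(lam : ℂ) - I * c * k‖ := by
      have := abs_mul_le_norm_ofReal_sub_I_mul lam c k
      rw [abs_mul, abs_of_pos (by linarith : (0 : ℝ) < c)] at this
      nlinarith [abs_nonneg k]
    nlinarith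

theorem norm_le_mul_norm_of_symbol_eq {A δ c lam k : ℝ} {κ X Y : ℂ} (hA : 0 ≤ A)
    (hκ : κ.re ≤ 0) (hc : 0 < c) (hlam : lam ≠ 0)
    (hsym : |k| / ‖(lam : ℂ) - I * c * k‖ ≤ δ * (A + 1))
    (h : ((A : ℂ) + 1 - κ) * X = (1 / c : ℂ) * (1 - lam / (lam - I * c * k)) * Y) :
    ‖X‖ ≤ δ * ‖Y‖ := by
  have hlow : A + 1 ≤ ‖(A : ℂ) + 1 - κ‖ := by
    simpa using (show A + 1 ≤ A + 1 - κ.re by linarith).trans (re_le_norm ((A : ℂ) + 1 - κ))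
  have hnorm := congrArg norm h
  rw [norm_mul, norm_mul, norm_inv_mul_one_sub_div k hc hlam] at hnorm
  have : (A + 1) * ‖X‖ ≤ (A + 1) * (δ * ‖Y‖) :=
    calc (A + 1) * ‖X‖ ≤ ‖(A : ℂ) + 1 - κ‖ * ‖X‖ := by gcongr
      _ = |k| / ‖(lam : ℂ) - I * c * k‖ * ‖Y‖ := hnorm
      _ ≤ δ * (A + 1) * ‖Y‖ := by gcongr
      _ = (A + 1) * (δ * ‖Y‖) := by ring
  exact le_of_mul_le_mul_left this (by linarith)

end Symbol

theorem ae_fourier_eigen_eq {FT : FourierL2} {β γ : ℝ → ℂ} {D : (ℝ → ℂ) → Prop}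
    {T E : (ℝ → ℂ) → ℝ → ℂ} (hT : IsMult FT β D T)
    (hE : IsMult FT γ (fun u => MemLp u 2 volume) E) {u w : ℝ → ℂ} (hDu : D u)
    (hu : MemLp u 2 volume) (hw : MemLp w 2 volume) (s κ : ℂ)
    (heig : (fun x => T u x + u x - s * (w x - E w x)) =ᵐ[volume] fun x => κ * u x) :
    ∀ᵐ k ∂volume, (β k + 1 - κ) * FT.toFun u k = s * (1 - γ k) * FT.toFun w k := by
  obtain ⟨hTu, hFTu⟩ := hT u hDu
  obtain ⟨hEw, hFEw⟩ := hE w hw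
  have hrhs := (hw.sub hEw).const_mul s
  filter_upwards [FT.map_sub (hTu.add hu) hrhs, FT.map_add' hTu hu, hFTu,
    FT.map_const_mul s (hw.sub hEw), FT.map_sub hw hEw, hFEw,
    FT.congr_ae ((hTu.add hu).sub hrhs) (hu.const_mul κ) heig, FT.map_const_mul κ hu]
    with k hlhs hsum hTk hsk hdiff hEk heigk hκk
  linear_combination heigk + hκk - hlhs - hsum - hTk + hsk + s * hdiff - s * hEk

theorem bbm_no_eigenvalue_large_lambda_general
    (m : ℝ) (hm : 1 ≤ m)
    (α : ℝ → ℝ) (a K : ℝ)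
    (ha : 0 < a)
    (hα_nonneg : ∀ k, 0 ≤ α k)
    (hα_lower : ∀ k, K ≤ |k| → a * |k| ^ m ≤ α k)
    (FT : FourierL2)
    (Mop : (ℝ → ℂ) → ℝ → ℂ)
    (hM : IsMult FT (fun k => (α k : ℂ)) (HmMem FT m) Mop)
    (f : ℝ → ℝ) (hf : ContDiff ℝ 1 f) (hf'0 : deriv f 0 = 0)
    (c : ℝ) (hc : 1 < c)
    (uc : ℝ → ℝ) (huc_cont : Continuous uc)
    (huc_decay : Tendsto uc (cocompact ℝ) (nhds 0))
    (Em : ℝ → (ℝ → ℂ) → ℝ → ℂ)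
    (hEm : ∀ lam : ℝ, 0 < lam → IsMult FT
        (fun k => (lam : ℂ) / (lam - Complex.I * c * k)) (fun u => MemLp u 2 volume) (Em lam))
    :
    ∃ Λ : ℝ, 0 < Λ ∧ ∀ lam : ℝ, Λ < lam →
      ¬ ∃ (k : ℂ) (u : ℝ → ℂ), k.re ≤ 0 ∧ HmMem FT m u ∧
        ¬ u =ᵐ[volume] (0 : ℝ → ℂ) ∧
        Abbm Mop Em f uc c lam u =ᵐ[volume] fun x => k * u x := by
  have hf' : Continuous (deriv f) := hf.continuous_deriv le_rfl
  obtain ⟨B, hB0, hB⟩ := exists_norm_le_of_tendsto_cocompact (hf'.comp huc_cont)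
    ((hf'.tendsto' 0 0 hf'0).comp huc_decay)
  obtain ⟨Λ, hΛ, hsym⟩ := exists_forall_div_norm_le (δ := 1 / (2 * (1 + B))) hm ha hα_nonneg
    hα_lower hc.le (by positivity)
  refine ⟨Λ, hΛ, fun lam hlam ⟨κ, u, hκ, hu, hu0, heig⟩ => hu0 ?_⟩
  have hlam0 : 0 < lam := hΛ.trans hlam
  set w : ℝ → ℂ := fun x => (1 + Complex.ofReal (deriv f (uc x))) * u x
  have hwu : ∀ x, ‖w x‖ ≤ (1 + B) * ‖u x‖ := fun x => by
    rw [norm_mul]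
    gcongr
    simpa using (norm_add_le (1 : ℂ) (Complex.ofReal (deriv f (uc x)))).trans (by simpa using hB x)
  have hw : MemLp w 2 volume := hu.1.of_le_mul
    ((Continuous.aestronglyMeasurable (by fun_prop)).mul hu.1.1) (ae_of_all _ hwu)
  have hFT := ae_fourier_eigen_eq hM (hEm lam hlam0) hu hu.1 hw (1 / c) κ heig
  refine FT.ae_eq_zero_of_norm_le (δ := 1 / (2 * (1 + B))) hu.1 hw (by positivity) ?_ ?_ hwu
  · rw [div_mul_eq_mul_div, one_mul, div_lt_one (by positivity)]
    linarith
  · filter_upwards [hFT] with k hk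
    exact norm_le_mul_norm_of_symbol_eq (hα_nonneg k) hκ (by linarith) hlam0.ne'
      (hsym lam hlam k) hk

/-- Lemma 2.6: there is `Λ > 0` such that for `λ > Λ` the operator `A^λ` has no
eigenvalues in `{Re k ≤ 0}`. -/
theorem bbm_no_eigenvalue_large_lambda
    (m : ℝ) (hm : 1 ≤ m)
    (α : ℝ → ℝ) (a b C₀ K : ℝ)
    (ha : 0 < a) (hb : 0 < b) (hC₀ : 0 < C₀) (hK : 0 < K)
    (hα_nonneg : ∀ k, 0 ≤ α k) (hα_smooth : ContDiff ℝ 1 α)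
    (hα_deriv : ∀ k, |deriv α k| ≤ C₀ * (1 + |k|) ^ (m - 1))
    (hα_lower : ∀ k, K ≤ |k| → a * |k| ^ m ≤ α k)
    (hα_upper : ∀ k, K ≤ |k| → α k ≤ b * |k| ^ m)
    (FT : FourierL2)
    (Mop : (ℝ → ℂ) → ℝ → ℂ)
    (hM : IsMult FT (fun k => (α k : ℂ)) (HmMem FT m) Mop)
    (f : ℝ → ℝ) (hf : ContDiff ℝ 1 f) (hf0 : f 0 = 0) (hf'0 : deriv f 0 = 0)
    (c : ℝ) (hc : 1 < c)
    (uc : ℝ → ℝ) (huc_cont : Continuous uc)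
    (huc_mem : HmMem FT m (fun x => (uc x : ℂ)))
    (huc_decay : Tendsto uc (cocompact ℝ) (nhds 0))
    (huc_eq : (fun x => Mop (fun y => (uc y : ℂ)) x + (1 - 1/c : ℂ) * (uc x : ℂ)
        - (1/c : ℂ) * (f (uc x) : ℂ)) =ᵐ[volume] 0)
    (Em : ℝ → (ℝ → ℂ) → ℝ → ℂ)
    (hEm : ∀ lam : ℝ, 0 < lam → IsMult FT
        (fun k => (lam : ℂ) / (lam - Complex.I * c * k)) (fun u => MemLp u 2 volume) (Em lam))
    :
    ∃ Λ : ℝ, 0 < Λ ∧ ∀ lam : ℝ, Λ < lam →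
      ¬ ∃ (k : ℂ) (u : ℝ → ℂ), k.re ≤ 0 ∧ HmMem FT m u ∧
        ¬ u =ᵐ[volume] (0 : ℝ → ℂ) ∧
        Abbm Mop Em f uc c lam u =ᵐ[volume] fun x => k * u x :=
  bbm_no_eigenvalue_large_lambda_general m hm α a K ha hα_nonneg hα_lower FT Mop hM f hf hf'0 c hc
    uc huc_cont huc_decay Em hEm
end
end

section
/- There exists Λ > 0 such that for every λ > Λ, the operator A^λ has no eigenvalues in the closed left half-plane: there exist no k ∈ ℂ with Re k ≤ 0 and nonzero u ∈ H^m(ℝ) satisfying A^λ u = k u. -/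
/-!
On the Fourier side the eigenvalue equation `A^λ u = k u` reads `z (ĝ - α û) = (k - c) û`, where
`g = f'(u_c) u` and `z = icξ / (λ - icξ)` is the symbol of `c∂ₓ/(λ - c∂ₓ)`. This symbol lies on the
circle `Re z = -|z|²`, so `|k - c + α z| ≥ c + α |z|²` whenever `Re k ≤ 0`. With `B` a bound of
`|f'(u_c)|`, the right-hand side is at least `2B|z|`: at high frequencies because `α ≥ B²/c` there
(AM-GM), at low frequencies because `|z| ≤ c|ξ|/λ` is small once `λ` is large. Hence
`|ĝ| ≥ 2B |û|` pointwise, and Plancherel gives `2B ‖u‖ ≤ ‖g‖ ≤ B ‖u‖`, forcing `u = 0`.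
-/

open MeasureTheory Filter Set

noncomputable section

/-- The operator `L₀ = M + c - f'(u_c)` for the KDV type equation. -/
def L0kdv (Mop : (ℝ → ℂ) → ℝ → ℂ) (f uc : ℝ → ℝ) (c : ℝ) (u : ℝ → ℂ) : ℝ → ℂ :=
  fun x => Mop u x + (c : ℂ) * u x - Complex.ofReal (deriv f (uc x)) * u x

/-- The operator `A^λ u = c u + (c∂ₓ/(λ - c∂ₓ))(f'(u_c)u - M u)` for the KDV type
equation, where `Top` is the Fourier multiplier with symbol `ick/(λ - ick)`. -/
def Akdv (Mop : (ℝ → ℂ) → ℝ → ℂ) (Top : (ℝ → ℂ) → ℝ → ℂ) (f uc : ℝ → ℝ) (c : ℝ)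
    (u : ℝ → ℂ) : ℝ → ℂ :=
  fun x => (c : ℂ) * u x + Top (fun y => Complex.ofReal (deriv f (uc y)) * u y - Mop u y) x

open Complex

theorem exists_pos_norm_le_of_tendsto_cocompact_zero {α β : Type*} [TopologicalSpace α]
    [NormedAddCommGroup β] {h : α → β} (hcont : Continuous h)
    (htend : Tendsto h (cocompact α) (nhds 0)) : ∃ B, 0 < B ∧ ∀ x, ‖h x‖ ≤ B := by
  let h₀ : ZeroAtInftyContinuousMap α β := ⟨⟨h, hcont⟩, htend⟩
  exact ⟨‖h₀.toBCF‖ + 1, by positivity,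
    fun x => (h₀.toBCF.norm_coe_le_norm x).trans (le_add_of_nonneg_right zero_le_one)⟩

theorem exists_forall_le_of_le_mul_abs_rpow {α : ℝ → ℝ} {a m K : ℝ} (ha : 0 < a) (hm : 0 < m)
    (hlower : ∀ ξ, K ≤ |ξ| → a * |ξ| ^ m ≤ α ξ) (E : ℝ) :
    ∃ R, 0 < R ∧ ∀ ξ, R ≤ |ξ| → E ≤ α ξ := by
  obtain ⟨R₀, hR₀⟩ := eventually_atTop.mp
    (((tendsto_rpow_atTop hm).const_mul_atTop ha).eventually_ge_atTop E)
  refine ⟨max (max K R₀) 1, by positivity, fun ξ hξ => ?_⟩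
  exact (hR₀ |ξ| (le_of_max_le_right (le_of_max_le_left hξ))).trans
    (hlower ξ (le_of_max_le_left (le_of_max_le_left hξ)))

/-- The symbol of `c∂ₓ/(λ - c∂ₓ)`. -/
def transportSymbol (c lam ξ : ℝ) : ℂ := I * c * ξ / (lam - I * c * ξ)

theorem transportSymbol_re (c lam ξ : ℝ) :
    (transportSymbol c lam ξ).re = -‖transportSymbol c lam ξ‖ ^ 2 := by
  rw [transportSymbol, Complex.sq_norm, Complex.div_re, Complex.normSq_div]
  simp [Complex.normSq_apply, neg_div]

theorem norm_transportSymbol_le {lam : ℝ} (hlam : 0 < lam) (c ξ : ℝ) :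
    ‖transportSymbol c lam ξ‖ ≤ |c * ξ| / lam := by
  have hden : lam ≤ ‖(lam : ℂ) - I * c * ξ‖ := by
    simpa [abs_of_pos hlam] using Complex.abs_re_le_norm ((lam : ℂ) - I * c * ξ)
  have hnum : ‖I * c * ξ‖ = |c * ξ| := by simp [abs_mul]
  rw [transportSymbol, norm_div, hnum]
  gcongr

theorem add_mul_sq_norm_le_norm_sub_add_mul {z k : ℂ} {c α : ℝ} (hk : k.re ≤ 0)
    (hz : z.re = -‖z‖ ^ 2) : c + α * ‖z‖ ^ 2 ≤ ‖k - c + α * z‖ := by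
  refine le_trans ?_ ((neg_le_abs _).trans (Complex.abs_re_le_norm _))
  simp only [sub_re, add_re, ofReal_re, re_ofReal_mul, hz]
  nlinarith

theorem two_mul_norm_le_norm_of_mul_sub_eq {x y z k : ℂ} {c α B : ℝ} (hc : 0 < c) (hα : 0 ≤ α)
    (hk : k.re ≤ 0) (hz : z.re = -‖z‖ ^ 2) (hcase : B ^ 2 ≤ c * α ∨ 2 * B * ‖z‖ ≤ c)
    (h : z * (y - α * x) = (k - c) * x) : 2 * B * ‖x‖ ≤ ‖y‖ := by
  set w : ℂ := k - c + α * z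
  have hzy : z * y = w * x := by linear_combination h
  have hw : c + α * ‖z‖ ^ 2 ≤ ‖w‖ := add_mul_sq_norm_le_norm_sub_add_mul hk hz
  have hwz : 2 * B * ‖z‖ ≤ ‖w‖ := by
    rcases hcase with hcα | hcB
    · -- AM-GM: `c (c + α r² - 2 B r) = (c - B r)² + (c α - B²) r²`
      nlinarith [sq_nonneg (c - B * ‖z‖), sq_nonneg ‖z‖]
    · nlinarith [sq_nonneg ‖z‖]
  rcases eq_or_ne z 0 with hz0 | hz0
  · have hw0 : w ≠ 0 := by
      rintro hw0
      simp only [hw0, hz0, norm_zero] at hw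
      linarith
    have hx : x = 0 := by simpa [hw0, hz0] using hzy.symm
    simp [hx]
  · refine le_of_mul_le_mul_left ?_ (norm_pos_iff.mpr hz0)
    calc ‖z‖ * (2 * B * ‖x‖) = 2 * B * ‖z‖ * ‖x‖ := by ring
      _ ≤ ‖w‖ * ‖x‖ := by gcongr
      _ = ‖z‖ * ‖y‖ := by rw [← norm_mul, ← hzy, norm_mul]

namespace FourierL2

variable (FT : FourierL2)

theorem toFun_congr_ae {u v : ℝ → ℂ} (hu : MemLp u 2 volume) (hv : MemLp v 2 volume)
    (h : u =ᵐ[volume] v) : FT.toFun u =ᵐ[volume] FT.toFun v := by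
  have hsub : MemLp (u - v) 2 volume := hu.sub hv
  have hzero : FT.toFun (u - v) =ᵐ[volume] 0 := by
    rw [← eLpNorm_eq_zero_iff (FT.memLp _ hsub).aestronglyMeasurable two_ne_zero,
      FT.plancherel _ hsub, eLpNorm_eq_zero_iff hsub.aestronglyMeasurable two_ne_zero]
    filter_upwards [h] with x hx using sub_eq_zero.mpr hx
  filter_upwards [hzero, FT.map_add (u - v) v hsub hv] with x h0 hadd
  simpa [h0] using hadd

theorem toFun_sub_ae {u v : ℝ → ℂ} (hu : MemLp u 2 volume) (hv : MemLp v 2 volume) :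
    FT.toFun (u - v) =ᵐ[volume] FT.toFun u - FT.toFun v := by
  have hsub : u - v = u + (-1 : ℂ) • v := by rw [neg_one_smul, sub_eq_add_neg]
  filter_upwards [FT.map_add u _ hu (hv.const_smul (-1 : ℂ)), FT.map_smul (-1) v hv]
    with x hadd hsmul
  rw [hsub, hadd, Pi.add_apply, hsmul]
  simp [sub_eq_add_neg]

theorem ae_eq_zero_of_two_mul_norm_toFun_le {u g : ℝ → ℂ} {B : ℝ} (hB : 0 < B)
    (hu : MemLp u 2 volume) (hg : MemLp g 2 volume) (hgu : ∀ᵐ x ∂volume, ‖g x‖ ≤ B * ‖u x‖)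
    (hhat : ∀ᵐ ξ ∂volume, 2 * B * ‖FT.toFun u ξ‖ ≤ ‖FT.toFun g ξ‖) : u =ᵐ[volume] 0 := by
  have hchain : ENNReal.ofReal (2 * B) * eLpNorm u 2 volume
      ≤ ENNReal.ofReal B * eLpNorm u 2 volume :=
    calc ENNReal.ofReal (2 * B) * eLpNorm u 2 volume
        = eLpNorm ((2 * B) • FT.toFun u) 2 volume := by
          rw [eLpNorm_const_smul, FT.plancherel u hu, Real.enorm_eq_ofReal (by positivity)]
      _ ≤ eLpNorm (FT.toFun g) 2 volume := by
          refine eLpNorm_mono_ae ?_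
          filter_upwards [hhat] with ξ hξ
          simpa [norm_smul, abs_of_pos hB] using hξ
      _ = eLpNorm g 2 volume := FT.plancherel g hg
      _ ≤ ENNReal.ofReal B * eLpNorm u 2 volume := eLpNorm_le_mul_eLpNorm_of_ae_le_mul hgu 2
  by_contra hu0
  have hN0 : eLpNorm u 2 volume ≠ 0 :=
    mt (eLpNorm_eq_zero_iff hu.aestronglyMeasurable two_ne_zero).mp hu0
  have := (ENNReal.ofReal_le_ofReal_iff hB.le).mp
    ((ENNReal.mul_le_mul_iff_left hN0 hu.eLpNorm_ne_top).mp hchain)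
  linarith

end FourierL2

theorem ae_transportSymbol_mul_eq_of_akdv_eq {FT : FourierL2} {m : ℝ} {α : ℝ → ℝ}
    {Mop T : (ℝ → ℂ) → ℝ → ℂ} {f uc : ℝ → ℝ} {c lam : ℝ} {k : ℂ} {u : ℝ → ℂ}
    (hM : IsMult FT (fun ξ => (α ξ : ℂ)) (HmMem FT m) Mop)
    (hT : IsMult FT (transportSymbol c lam) (fun v => MemLp v 2 volume) T)
    (hu : HmMem FT m u) (hg : MemLp (fun x => ((deriv f (uc x) : ℝ) : ℂ) * u x) 2 volume)
    (heig : Akdv Mop T f uc c u =ᵐ[volume] fun x => k * u x) :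
    ∀ᵐ ξ ∂volume, transportSymbol c lam ξ *
      (FT.toFun (fun x => ((deriv f (uc x) : ℝ) : ℂ) * u x) ξ - α ξ * FT.toFun u ξ)
        = (k - c) * FT.toFun u ξ := by
  set g : ℝ → ℂ := fun x => ((deriv f (uc x) : ℝ) : ℂ) * u x
  obtain ⟨hMu, hMu_hat⟩ := hM u hu
  obtain ⟨hTw, hTw_hat⟩ := hT (g - Mop u) (hg.sub hMu)
  have hTw_eq : T (g - Mop u) =ᵐ[volume] (k - c) • u := by
    filter_upwards [heig] with x hx
    simp only [Akdv] at hx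
    simp only [Pi.smul_apply, smul_eq_mul]
    linear_combination hx
  filter_upwards [FT.toFun_congr_ae hTw (hu.1.const_smul _) hTw_eq, FT.map_smul (k - c) u hu.1,
    hTw_hat, FT.toFun_sub_ae hg hMu, hMu_hat] with ξ h₁ h₂ h₃ h₄ h₅
  calc transportSymbol c lam ξ * (FT.toFun g ξ - α ξ * FT.toFun u ξ)
      = FT.toFun (T (g - Mop u)) ξ := by rw [h₃, h₄, Pi.sub_apply, h₅]
    _ = (k - c) * FT.toFun u ξ := by rw [h₁, h₂]; rfl

theorem kdv_no_eigenvalue_large_lambda_general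
    (m : ℝ) (hm : 1 ≤ m)
    (α : ℝ → ℝ) (a K : ℝ)
    (ha : 0 < a)
    (hα_nonneg : ∀ k, 0 ≤ α k)
    (hα_lower : ∀ k, K ≤ |k| → a * |k| ^ m ≤ α k)
    (FT : FourierL2)
    (Mop : (ℝ → ℂ) → ℝ → ℂ)
    (hM : IsMult FT (fun k => (α k : ℂ)) (HmMem FT m) Mop)
    (f : ℝ → ℝ) (hf : ContDiff ℝ 1 f) (hf'0 : deriv f 0 = 0)
    (c : ℝ) (hc : 0 < c)
    (uc : ℝ → ℝ) (huc_cont : Continuous uc)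
    (huc_decay : Tendsto uc (cocompact ℝ) (nhds 0))
    (Top : ℝ → (ℝ → ℂ) → ℝ → ℂ)
    (hTop : ∀ lam : ℝ, 0 < lam → IsMult FT
        (fun k => (Complex.I * c * k) / (lam - Complex.I * c * k))
        (fun u => MemLp u 2 volume) (Top lam))
    :
    ∃ Λ : ℝ, 0 < Λ ∧ ∀ lam : ℝ, Λ < lam →
      ¬ ∃ (k : ℂ) (u : ℝ → ℂ), k.re ≤ 0 ∧ HmMem FT m u ∧
        ¬ u =ᵐ[volume] (0 : ℝ → ℂ) ∧
        Akdv Mop (Top lam) f uc c u =ᵐ[volume] fun x => k * u x := by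
  have hV : Continuous fun x => deriv f (uc x) := (hf.continuous_deriv le_rfl).comp huc_cont
  obtain ⟨B, hB, hbound⟩ := exists_pos_norm_le_of_tendsto_cocompact_zero hV
    (by simpa only [hf'0, Function.comp_def] using
      ((hf.continuous_deriv le_rfl).tendsto 0).comp huc_decay)
  obtain ⟨R, hR, hαR⟩ := exists_forall_le_of_le_mul_abs_rpow ha (by linarith) hα_lower (B ^ 2 / c)
  refine ⟨2 * B * R, by positivity, fun lam hlam => ?_⟩
  rintro ⟨k, u, hk, hu, hu0, heig⟩
  have hlam0 : 0 < lam := lt_trans (by positivity) hlam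
  set g : ℝ → ℂ := fun x => ((deriv f (uc x) : ℝ) : ℂ) * u x
  have hgu : ∀ x, ‖g x‖ ≤ B * ‖u x‖ := fun x => by
    simpa only [g, norm_mul, Complex.norm_real] using
      mul_le_mul_of_nonneg_right (hbound x) (norm_nonneg (u x))
  have hg : MemLp g 2 volume := hu.1.of_le_mul
    ((continuous_ofReal.comp hV).aestronglyMeasurable.mul hu.1.aestronglyMeasurable)
    (Eventually.of_forall hgu)
  refine hu0 (FT.ae_eq_zero_of_two_mul_norm_toFun_le hB hu.1 hg (Eventually.of_forall hgu) ?_)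
  filter_upwards [ae_transportSymbol_mul_eq_of_akdv_eq hM (hTop lam hlam0) hu hg heig] with ξ hξ
  refine two_mul_norm_le_norm_of_mul_sub_eq hc (hα_nonneg ξ) hk (transportSymbol_re c lam ξ) ?_ hξ
  rcases le_or_gt R |ξ| with hhigh | hlow
  · exact Or.inl ((div_le_iff₀' hc).mp (hαR ξ hhigh))
  · right
    calc 2 * B * ‖transportSymbol c lam ξ‖ ≤ 2 * B * (c * R / lam) := by
          grw [norm_transportSymbol_le hlam0, abs_mul, abs_of_pos hc, hlow]
      _ ≤ c := by
          rw [mul_div_assoc', div_le_iff₀ hlam0]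
          nlinarith

/-- Lemma 4.1: there is `Λ > 0` such that for `λ > Λ` the KDV operator `A^λ` has no
eigenvalues in `{Re k ≤ 0}`. -/
theorem kdv_no_eigenvalue_large_lambda
    (m : ℝ) (hm : 1 ≤ m)
    (α : ℝ → ℝ) (a b C₀ K : ℝ)
    (ha : 0 < a) (hb : 0 < b) (hC₀ : 0 < C₀) (hK : 0 < K)
    (hα_nonneg : ∀ k, 0 ≤ α k) (hα_smooth : ContDiff ℝ 1 α)
    (hα_deriv : ∀ k, |deriv α k| ≤ C₀ * (1 + |k|) ^ (m - 1))
    (hα_lower : ∀ k, K ≤ |k| → a * |k| ^ m ≤ α k)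
    (hα_upper : ∀ k, K ≤ |k| → α k ≤ b * |k| ^ m)
    (FT : FourierL2)
    (Mop : (ℝ → ℂ) → ℝ → ℂ)
    (hM : IsMult FT (fun k => (α k : ℂ)) (HmMem FT m) Mop)
    (f : ℝ → ℝ) (hf : ContDiff ℝ 1 f) (hf0 : f 0 = 0) (hf'0 : deriv f 0 = 0)
    (c : ℝ) (hc : 0 < c)
    (uc : ℝ → ℝ) (huc_cont : Continuous uc)
    (huc_mem : HmMem FT m (fun x => (uc x : ℂ)))
    (huc_decay : Tendsto uc (cocompact ℝ) (nhds 0))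
    (huc_eq : (fun x => Mop (fun y => (uc y : ℂ)) x + (c : ℂ) * (uc x : ℂ)
        - (f (uc x) : ℂ)) =ᵐ[volume] 0)
    (Top : ℝ → (ℝ → ℂ) → ℝ → ℂ)
    (hTop : ∀ lam : ℝ, 0 < lam → IsMult FT
        (fun k => (Complex.I * c * k) / (lam - Complex.I * c * k))
        (fun u => MemLp u 2 volume) (Top lam))
    :
    ∃ Λ : ℝ, 0 < Λ ∧ ∀ lam : ℝ, Λ < lam →
      ¬ ∃ (k : ℂ) (u : ℝ → ℂ), k.re ≤ 0 ∧ HmMem FT m u ∧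
        ¬ u =ᵐ[volume] (0 : ℝ → ℂ) ∧
        Akdv Mop (Top lam) f uc c u =ᵐ[volume] fun x => k * u x :=
  kdv_no_eigenvalue_large_lambda_general m hm α a K ha hα_nonneg hα_lower FT Mop hM f hf hf'0 c hc
    uc huc_cont huc_decay Top hTop
end
end
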